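/- arXiv:2104.10307 — 3 statements merged into one kernel-verified Lean document; each statement's English description precedes it below -/
import Mathlib

section
/- Let φ, L, L†, V be as in the heavy-ball Lyapunov setup, and let κ ∈ [K̲, K̄] with 0 < K̲ ≤ K̄. For any (q,p) with 𝟙ᵀp = 0, and flow direction (q̇, ṗ) = (p, −κp − L∇φ(q)), the derivative of V along this direction satisfies ⟨∇φ(q), p⟩ − ⟨L∇φ(q), L†p⟩ − κ pᵀL†p = −κ pᵀL†p ≤ 0. -/
/-!
Write `p = L x`, which is possible because `p ⊥ 𝟙` and `𝟙` spans `ker L = ker Lᵀ`, so `p` lies in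
`(ker Lᵀ)ᗮ = range L`. For such `p` the only property of `L†` that matters is `L L† L = L`:
it turns `⟨L g, L† p⟩` into `⟨g, p⟩` and `pᵀ L† p` into `xᵀ L x ≥ 0`.
-/

open Matrix

namespace Matrix

variable {ι : Type*} [Fintype ι]

theorem exists_mulVec_eq_of_forall_dotProduct_eq_zero [DecidableEq ι] {m : Type*} [Fintype m]
    [DecidableEq m] (A : Matrix m ι ℝ) {p : m → ℝ} (hp : ∀ v, Aᵀ *ᵥ v = 0 → v ⬝ᵥ p = 0) :
    ∃ x, A *ᵥ x = p := by
  have hmem : WithLp.toLp 2 p ∈ (LinearMap.ker (toEuclideanLin Aᴴ))ᗮ := by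
    rw [Submodule.mem_orthogonal]
    intro v hv
    have := hp v.ofLp (by simpa [toLpLin_apply] using hv)
    simpa [EuclideanSpace.inner_eq_star_dotProduct, dotProduct_comm] using this
  rw [LinearMap.orthogonal_ker, toEuclideanLin_conjTranspose_eq_adjoint,
    LinearMap.adjoint_adjoint] at hmem
  obtain ⟨x, hx⟩ := hmem
  exact ⟨x.ofLp, by simpa [toLpLin_apply] using congrArg WithLp.ofLp hx⟩

theorem exists_mulVec_eq_of_sum_eq_zero [DecidableEq ι] {L : Matrix ι ι ℝ} (hL : Lᵀ = L)
    (hker : LinearMap.ker L.mulVecLin = Submodule.span ℝ {fun _ => 1})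
    {p : ι → ℝ} (hp : ∑ i, p i = 0) : ∃ x, L *ᵥ x = p := by
  refine L.exists_mulVec_eq_of_forall_dotProduct_eq_zero fun v hv => ?_
  rw [hL] at hv
  have hv : v ∈ LinearMap.ker L.mulVecLin := hv
  rw [hker, Submodule.mem_span_singleton] at hv
  obtain ⟨c, rfl⟩ := hv
  simp [dotProduct, ← Finset.mul_sum, hp]

theorem mulVec_dotProduct_mulVec_mulVec_of_mul_mul_eq {L Ld : Matrix ι ι ℝ} (hL : Lᵀ = L)
    (hLd : L * Ld * L = L) (g x : ι → ℝ) :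
    (L *ᵥ g) ⬝ᵥ (Ld *ᵥ (L *ᵥ x)) = g ⬝ᵥ (L *ᵥ x) := by
  rw [← hL, mulVec_transpose, ← dotProduct_mulVec, hL, mulVec_mulVec, mulVec_mulVec, hLd]

end Matrix

theorem stmt7_general (n : ℕ) (L Ld : Matrix (Fin n) (Fin n) ℝ)
    (hpsd : L.PosSemidef)
    (hker : LinearMap.ker L.mulVecLin =
      Submodule.span ℝ {(fun _ => 1 : Fin n → ℝ)})
    (hmp1 : L * Ld * L = L)
    (Kl Ku κ : ℝ) (hKl : 0 < Kl) (hκ : κ ∈ Set.Icc Kl Ku)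
    (g p : Fin n → ℝ) (hp : (∑ i, p i) = 0) :
    g ⬝ᵥ p - (L.mulVec g) ⬝ᵥ (Ld.mulVec p) - κ * (p ⬝ᵥ Ld.mulVec p) =
      -(κ * (p ⬝ᵥ Ld.mulVec p)) ∧
    g ⬝ᵥ p - (L.mulVec g) ⬝ᵥ (Ld.mulVec p) - κ * (p ⬝ᵥ Ld.mulVec p) ≤ 0 := by
  have hL : Lᵀ = L := by
    simpa [conjTranspose_eq_transpose_of_trivial] using hpsd.isHermitian.eq
  obtain ⟨x, rfl⟩ := exists_mulVec_eq_of_sum_eq_zero hL hker hp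
  have hcross := mulVec_dotProduct_mulVec_mulVec_of_mul_mul_eq hL hmp1 g x
  have hquad : 0 ≤ (L *ᵥ x) ⬝ᵥ (Ld *ᵥ (L *ᵥ x)) := by
    rw [mulVec_dotProduct_mulVec_mulVec_of_mul_mul_eq hL hmp1 x x]
    simpa using hpsd.dotProduct_mulVec_nonneg x
  have hκ₀ : 0 ≤ κ := hKl.le.trans hκ.1
  rw [hcross]
  exact ⟨by ring, by linarith [mul_nonneg hκ₀ hquad]⟩

/-- Along the heavy-ball flow direction, the Lie derivative of `V`
satisfies `⟨∇φ(q),p⟩ − ⟨L∇φ(q), L†p⟩ − κ pᵀL†p = −κ pᵀL†p ≤ 0`.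
Here `g` denotes `∇φ(q)`. -/
theorem stmt7 (n : ℕ) (L Ld : Matrix (Fin n) (Fin n) ℝ)
    (hsym : L.IsSymm) (hpsd : L.PosSemidef)
    (hker : LinearMap.ker L.mulVecLin =
      Submodule.span ℝ {(fun _ => 1 : Fin n → ℝ)})
    (hmp1 : L * Ld * L = L) (hmp2 : Ld * L * Ld = Ld)
    (hmp3 : (L * Ld)ᵀ = L * Ld) (hmp4 : (Ld * L)ᵀ = Ld * L)
    (Kl Ku κ : ℝ) (hKl : 0 < Kl) (hKlKu : Kl ≤ Ku) (hκ : κ ∈ Set.Icc Kl Ku)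
    (g p : Fin n → ℝ) (hp : (∑ i, p i) = 0) :
    g ⬝ᵥ p - (L.mulVec g) ⬝ᵥ (Ld.mulVec p) - κ * (p ⬝ᵥ Ld.mulVec p) =
      -(κ * (p ⬝ᵥ Ld.mulVec p)) ∧
    g ⬝ᵥ p - (L.mulVec g) ⬝ᵥ (Ld.mulVec p) - κ * (p ⬝ᵥ Ld.mulVec p) ≤ 0 :=
  stmt7_general n L Ld hpsd hker hmp1 Kl Ku κ hKl hκ g p hp
end

section
/- Let κ: ℝ²ⁿ ⇉ ℝ be defined by κ(q,p) = {K̄} if ⟨L∇φ(q), p⟩ > 0, {K̲} if ⟨L∇φ(q), p⟩ < 0, and [K̲, K̄] if ⟨L∇φ(q), p⟩ = 0, with 0 < K̲ ≤ K̄ and ∇φ continuous. Then the set-valued flow map F(q,p) = {(p, −kp − L∇φ(q)) : k ∈ κ(q,p)} has closed graph, is locally bounded, and has nonempty convex values at every point. -/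
open Set Matrix

/-- The set-valued gain of the hybrid-inspired heavy ball method. -/
def kset (Kl Ku s : ℝ) : Set ℝ :=
  if 0 < s then {Ku} else if s < 0 then {Kl} else Set.Icc Kl Ku

/-!
The flow map is `x ↦ {a x + k • b x | k ∈ κ(x)}` with `a, b` continuous, so each property
reduces to one of the gain `κ`. Its values are nonempty intervals inside the compact `[K̲, K̄]`,
and its graph is closed because the one-sided constraints `s > 0 → k = K̄` and `s < 0 → k = K̲`
are closed conditions. A closed graph with values in a fixed compact set stays closed under a
continuous image, since projecting away a compact factor is a closed map; local boundedness is
compactness of the image of `closedBall x ε ×ˢ [K̲, K̄]`.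
-/

section Gain

variable {Kl Ku : ℝ}

lemma mem_kset_iff (h : Kl ≤ Ku) {s k : ℝ} :
    k ∈ kset Kl Ku s ↔ k ∈ Icc Kl Ku ∧ (s ≤ 0 ∨ k = Ku) ∧ (0 ≤ s ∨ k = Kl) := by
  unfold kset
  rcases lt_trichotomy s 0 with hs | rfl | hs
  · simp only [if_neg hs.not_gt, if_pos hs, mem_singleton_iff]
    constructor
    · rintro rfl
      exact ⟨⟨le_rfl, h⟩, .inl hs.le, .inr rfl⟩
    · rintro ⟨-, -, hk⟩
      exact hk.resolve_left hs.not_ge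
  · simp
  · simp only [if_pos hs, mem_singleton_iff]
    constructor
    · rintro rfl
      exact ⟨⟨h, le_rfl⟩, .inr rfl, .inl hs.le⟩
    · rintro ⟨-, hk, -⟩
      exact hk.resolve_left hs.not_ge

lemma kset_subset_Icc (h : Kl ≤ Ku) (s : ℝ) : kset Kl Ku s ⊆ Icc Kl Ku :=
  fun _ hk => ((mem_kset_iff h).mp hk).1

lemma isClosed_kset_graph (h : Kl ≤ Ku) : IsClosed {z : ℝ × ℝ | z.2 ∈ kset Kl Ku z.1} := by
  simp only [mem_kset_iff h, ofPred_and, ofPred_or]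
  have hKu : IsClosed {z : ℝ × ℝ | z.2 = Ku} := isClosed_eq continuous_snd continuous_const
  have hKl : IsClosed {z : ℝ × ℝ | z.2 = Kl} := isClosed_eq continuous_snd continuous_const
  exact (isClosed_Icc.preimage continuous_snd).inter
    (((isClosed_le continuous_fst continuous_const).union hKu).inter
      ((isClosed_le continuous_const continuous_fst).union hKl))

lemma kset_nonempty (h : Kl ≤ Ku) (s : ℝ) : (kset Kl Ku s).Nonempty := by
  unfold kset
  split_ifs
  · exact singleton_nonempty Ku
  · exact singleton_nonempty Kl
  · exact nonempty_Icc.mpr h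

lemma convex_kset (s : ℝ) : Convex ℝ (kset Kl Ku s) := by
  unfold kset
  split_ifs
  · exact convex_singleton Ku
  · exact convex_singleton Kl
  · exact convex_Icc Kl Ku

end Gain

section SetValuedImage

variable {X Λ E : Type*}

lemma isClosed_graph_image_of_subset_isCompact [TopologicalSpace X] [TopologicalSpace Λ]
    [TopologicalSpace E] [T2Space E] {K : X → Set Λ} {C : Set Λ} {f : X → Λ → E}
    (hK : IsClosed {z : X × Λ | z.2 ∈ K z.1}) (hC : IsCompact C) (hKC : ∀ x, K x ⊆ C)
    (hf : Continuous (Function.uncurry f)) :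
    IsClosed {z : X × E | z.2 ∈ f z.1 '' K z.1} := by
  have : CompactSpace C := isCompact_iff_compactSpace.mp hC
  let S : Set (C × (X × E)) := {w | w.2.2 = f w.2.1 w.1 ∧ (w.1 : Λ) ∈ K w.2.1}
  have hS : IsClosed S := by
    have hxk : Continuous fun w : C × (X × E) => (w.2.1, (w.1 : Λ)) := by fun_prop
    exact (isClosed_eq (by fun_prop) (hf.comp hxk)).inter (hK.preimage hxk)
  convert isClosedMap_snd_of_compactSpace S hS using 1
  ext z
  constructor
  · rintro ⟨k, hk, hv⟩
    exact ⟨(⟨k, hKC _ hk⟩, z), ⟨hv.symm, hk⟩, rfl⟩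
  · rintro ⟨⟨k, _⟩, ⟨hv, hk⟩, rfl⟩
    exact ⟨k, hk, hv.symm⟩

lemma exists_norm_le_of_subset_isCompact [SeminormedAddCommGroup X] [ProperSpace X]
    [TopologicalSpace Λ] [SeminormedAddCommGroup E] {K : X → Set Λ} {C : Set Λ} {f : X → Λ → E}
    (hC : IsCompact C) (hKC : ∀ x, K x ⊆ C) (hf : Continuous (Function.uncurry f))
    (x : X) (ε : ℝ) : ∃ M : ℝ, ∀ y, ‖y - x‖ ≤ ε → ∀ v ∈ f y '' K y, ‖v‖ ≤ M := by
  obtain ⟨M, hM⟩ := (((isCompact_closedBall x ε).prod hC).image hf).isBounded.exists_norm_le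
  refine ⟨M, fun y hy => ?_⟩
  rintro _ ⟨k, hk, rfl⟩
  exact hM _ ⟨(y, k), ⟨mem_closedBall_iff_norm.mpr hy, hKC y hk⟩, rfl⟩

end SetValuedImage

lemma Convex.image_add_smul {E : Type*} [AddCommGroup E] [Module ℝ E] {K : Set ℝ}
    (hK : Convex ℝ K) (a b : E) : Convex ℝ ((fun k => a + k • b) '' K) := by
  simpa only [image_image] using (hK.is_linear_image (IsLinearMap.isLinearMap_smul' b)).translate a

theorem stmt13_general (n : ℕ) (L : Matrix (Fin n) (Fin n) ℝ)
    (g : (Fin n → ℝ) → (Fin n → ℝ)) (hg : Continuous g)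
    (Kl Ku : ℝ) (hKlKu : Kl ≤ Ku)
    (F : (Fin n → ℝ) × (Fin n → ℝ) → Set ((Fin n → ℝ) × (Fin n → ℝ)))
    (hF : ∀ q p : Fin n → ℝ, F (q, p) =
      {v | ∃ k ∈ kset Kl Ku ((L.mulVec (g q)) ⬝ᵥ p),
        v = (p, -(k • p) - L.mulVec (g q))}) :
    IsClosed {x : ((Fin n → ℝ) × (Fin n → ℝ)) × ((Fin n → ℝ) × (Fin n → ℝ)) |
      x.2 ∈ F x.1} ∧
    (∀ x : (Fin n → ℝ) × (Fin n → ℝ), ∃ ε > (0:ℝ), ∃ M : ℝ,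
      ∀ y, ‖y - x‖ ≤ ε → ∀ v ∈ F y, ‖v‖ ≤ M) ∧
    (∀ x : (Fin n → ℝ) × (Fin n → ℝ), (F x).Nonempty ∧ Convex ℝ (F x)) := by
  let a : (Fin n → ℝ) × (Fin n → ℝ) → (Fin n → ℝ) × (Fin n → ℝ) :=
    fun x => (x.2, -(L *ᵥ g x.1))
  let b : (Fin n → ℝ) × (Fin n → ℝ) → (Fin n → ℝ) × (Fin n → ℝ) :=
    fun x => (0, -x.2)
  let κ : (Fin n → ℝ) × (Fin n → ℝ) → Set ℝ := fun x => kset Kl Ku (L *ᵥ g x.1 ⬝ᵥ x.2)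
  obtain rfl : F = fun x => (fun k => a x + k • b x) '' κ x := by
    funext ⟨q, p⟩
    rw [hF q p]
    ext v
    simp only [mem_ofPred_eq, mem_image, a, b, κ, eq_comm (a := v), Prod.smul_mk,
      Prod.mk_add_mk, smul_zero, add_zero, smul_neg]
    simp only [sub_eq_add_neg, add_comm]
  have hf : Continuous (Function.uncurry fun x (k : ℝ) => a x + k • b x) := by
    simp only [a, b]; fun_prop
  have hκ : IsClosed {z : ((Fin n → ℝ) × (Fin n → ℝ)) × ℝ | z.2 ∈ κ z.1} :=
    (isClosed_kset_graph hKlKu).preimage (by fun_prop :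
      Continuous fun z : ((Fin n → ℝ) × (Fin n → ℝ)) × ℝ => (L *ᵥ g z.1.1 ⬝ᵥ z.1.2, z.2))
  have hκC : ∀ x, κ x ⊆ Icc Kl Ku := fun x => kset_subset_Icc hKlKu _
  exact ⟨isClosed_graph_image_of_subset_isCompact hκ isCompact_Icc hκC hf,
    fun x => ⟨1, one_pos, exists_norm_le_of_subset_isCompact isCompact_Icc hκC hf x 1⟩,
    fun x => ⟨(kset_nonempty hKlKu _).image _, (convex_kset _).image_add_smul (a x) (b x)⟩⟩

/-- The set-valued heavy-ball flow map
`F(q,p) = {(p, −kp − L∇φ(q)) : k ∈ κ(q,p)}` has closed graph, is locally bounded,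
and has nonempty convex values (the hybrid basic conditions). Here `g = ∇φ` is
continuous and `0 < K̲ ≤ K̄`. -/
theorem stmt13 (n : ℕ) (L : Matrix (Fin n) (Fin n) ℝ)
    (g : (Fin n → ℝ) → (Fin n → ℝ)) (hg : Continuous g)
    (Kl Ku : ℝ) (hKl : 0 < Kl) (hKlKu : Kl ≤ Ku)
    (F : (Fin n → ℝ) × (Fin n → ℝ) → Set ((Fin n → ℝ) × (Fin n → ℝ)))
    (hF : ∀ q p : Fin n → ℝ, F (q, p) =
      {v | ∃ k ∈ kset Kl Ku ((L.mulVec (g q)) ⬝ᵥ p),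
        v = (p, -(k • p) - L.mulVec (g q))}) :
    IsClosed {x : ((Fin n → ℝ) × (Fin n → ℝ)) × ((Fin n → ℝ) × (Fin n → ℝ)) |
      x.2 ∈ F x.1} ∧
    (∀ x : (Fin n → ℝ) × (Fin n → ℝ), ∃ ε > (0:ℝ), ∃ M : ℝ,
      ∀ y, ‖y - x‖ ≤ ε → ∀ v ∈ F y, ‖v‖ ≤ M) ∧
    (∀ x : (Fin n → ℝ) × (Fin n → ℝ), (F x).Nonempty ∧ Convex ℝ (F x)) :=
  stmt13_general n L g hg Kl Ku hKlKu F hF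
end

section
/- Consider a timer variable τ evolving according to the hybrid dynamics: during flows τ̇ ∈ [0, δ] with τ constrained to [0, N₀], and at jumps (allowed only when τ ∈ [1, N₀]) τ⁺ = τ − 1. Then along any solution, the number of jumps j in any hybrid time interval from (s, j₁) to (t, j₂) satisfies j₂ − j₁ ≤ δ(t − s) + N₀. -/
/-!
The quantity `τ + j - δ * t` is nonincreasing along hybrid time: during flows the timer grows
at rate at most `δ`, and a jump lowers the timer by `1` while raising the jump counter by `1`.
Since the timer stays in `[0, N₀]`, the counter can outrun `δ * t` by at most `N₀`.
-/

open Set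

-- A solution is encoded by its jump times `t` and by `τ j`, the timer on the flow interval
-- `[t j, t (j + 1)]`.
section DwellTime

variable {δ : ℝ} {t : ℕ → ℝ} {τ : ℕ → ℝ → ℝ}

theorem timer_add_index_le (ht : Monotone t)
    (hrate : ∀ j s u, t j ≤ s → s ≤ u → u ≤ t (j + 1) → τ j u - τ j s ≤ δ * (u - s))
    (hreset : ∀ j, τ (j + 1) (t (j + 1)) = τ j (t (j + 1)) - 1)
    {j₁ j₂ : ℕ} {s u : ℝ} (hj : j₁ ≤ j₂) (hs : s ∈ Icc (t j₁) (t (j₁ + 1)))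
    (hu : u ∈ Icc (t j₂) (t (j₂ + 1))) (hsu : s ≤ u) :
    τ j₂ u + j₂ ≤ τ j₁ s + j₁ + δ * (u - s) := by
  induction j₂, hj using Nat.le_induction generalizing u with
  | base => linarith [hrate j₁ s u hs.1 hsu hu.2]
  | succ j hj ih =>
    have hs_le : s ≤ t (j + 1) := hs.2.trans (ht (Nat.succ_le_succ hj))
    have hbefore := ih (u := t (j + 1)) ⟨ht (Nat.le_succ j), le_rfl⟩ hs_le
    have hafter := hrate (j + 1) (t (j + 1)) u le_rfl hu.1 hu.2
    push_cast
    linarith [hreset j]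

end DwellTime

theorem stmt15_general (δ : ℝ) (N₀ : ℕ)
    (t : ℕ → ℝ) (ht : ∀ j : ℕ, t j ≤ t (j + 1))
    (τ : ℕ → ℝ → ℝ)
    (hflow : ∀ j : ℕ, ∀ s u : ℝ, t j ≤ s → s ≤ u → u ≤ t (j + 1) →
      0 ≤ τ j u - τ j s ∧ τ j u - τ j s ≤ δ * (u - s))
    (hrange : ∀ j : ℕ, ∀ s ∈ Icc (t j) (t (j + 1)), τ j s ∈ Icc (0:ℝ) (N₀:ℝ))
    (hjump : ∀ j : ℕ, 1 ≤ τ j (t (j + 1)) ∧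
      τ (j + 1) (t (j + 1)) = τ j (t (j + 1)) - 1) :
    ∀ j₁ j₂ : ℕ, ∀ s u : ℝ, j₁ ≤ j₂ →
      s ∈ Icc (t j₁) (t (j₁ + 1)) → u ∈ Icc (t j₂) (t (j₂ + 1)) → s ≤ u →
      ((j₂ : ℝ) - (j₁ : ℝ)) ≤ δ * (u - s) + (N₀ : ℝ) := by
  intro j₁ j₂ s u hj hs hu hsu
  have hdecay := timer_add_index_le (monotone_nat_of_le_succ ht)
    (fun j s u h₁ h₂ h₃ => (hflow j s u h₁ h₂ h₃).2) (fun j => (hjump j).2) hj hs hu hsu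
  linarith [(hrange j₁ s hs).2, (hrange j₂ u hu).1]

/-- The Cai–Teel–Goebel dwell-time automaton: a timer `τ` flows with
rate in `[0, δ]`, stays in `[0, N₀]`, may jump only when `τ ≥ 1`, and decreases by
`1` at each jump.  Then along any solution, the number of jumps between hybrid
times `(s, j₁)` and `(u, j₂)` satisfies `j₂ − j₁ ≤ δ(u − s) + N₀`.
A solution is modeled by its nondecreasing jump times `t : ℕ → ℝ` and the timer
value `τ j` on the `j`-th flow interval `[t j, t (j+1)]`. -/
theorem stmt15 (δ : ℝ) (hδ : 0 ≤ δ) (N₀ : ℕ) (hN₀ : 0 < N₀)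
    (t : ℕ → ℝ) (ht : ∀ j : ℕ, t j ≤ t (j + 1))
    (τ : ℕ → ℝ → ℝ)
    (hflow : ∀ j : ℕ, ∀ s u : ℝ, t j ≤ s → s ≤ u → u ≤ t (j + 1) →
      0 ≤ τ j u - τ j s ∧ τ j u - τ j s ≤ δ * (u - s))
    (hrange : ∀ j : ℕ, ∀ s ∈ Icc (t j) (t (j + 1)), τ j s ∈ Icc (0:ℝ) (N₀:ℝ))
    (hjump : ∀ j : ℕ, 1 ≤ τ j (t (j + 1)) ∧
      τ (j + 1) (t (j + 1)) = τ j (t (j + 1)) - 1) :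
    ∀ j₁ j₂ : ℕ, ∀ s u : ℝ, j₁ ≤ j₂ →
      s ∈ Icc (t j₁) (t (j₁ + 1)) → u ∈ Icc (t j₂) (t (j₂ + 1)) → s ≤ u →
      ((j₂ : ℝ) - (j₁ : ℝ)) ≤ δ * (u - s) + (N₀ : ℝ) :=
  stmt15_general δ N₀ t ht τ hflow hrange hjump
end
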